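/- arXiv:2008.12909 — 3 statements merged into one kernel-verified Lean document; each statement's English description precedes it below -/
import Mathlib

section
/- Let f : ℝⁿ → ℝ be D-Lipschitz with D ≥ 0, and let μ > 0. Then for every x ∈ ℝⁿ, f_μ(x) ≤ f(x) + μ·D·√n, where f_μ is the Gaussian-smoothed function of f with parameter μ. -/
open MeasureTheory ProbabilityTheory

/-- The standard Gaussian measure on `ℝⁿ` (Euclidean space), the product over the `n`
coordinates of the real Gaussian measure with mean 0 and variance 1. -/
noncomputable def stdGaussian (n : ℕ) : Measure (EuclideanSpace ℝ (Fin n)) :=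
  (Measure.pi fun _ : Fin n => gaussianReal 0 1).map
    (MeasurableEquiv.toLp 2 (Fin n → ℝ))

/-- The Gaussian-smoothed function of `f` with smoothing parameter `μ`. -/
noncomputable def gaussianSmoothed {n : ℕ} (f : EuclideanSpace ℝ (Fin n) → ℝ) (μ : ℝ)
    (x : EuclideanSpace ℝ (Fin n)) : ℝ :=
  ∫ ξ, f (x + μ • ξ) ∂(stdGaussian n)

open scoped NNReal RealInnerProductSpace

/-!
Lipschitz continuity gives `f (x + μ • ξ) ≤ f x + μ * D * ‖ξ‖` pointwise, so integrating against
the Gaussian bounds `f_μ x` by `f x + μ * D * 𝔼‖ξ‖`. Finally `(𝔼‖ξ‖)² ≤ 𝔼‖ξ‖² = n`: the mean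
square norm is the sum of the variances of the `n` coordinates along an orthonormal basis.
-/

theorem integral_le_sqrt_integral_sq {Ω : Type*} [MeasurableSpace Ω] {P : Measure Ω}
    [IsProbabilityMeasure P] {X : Ω → ℝ} (hX : MemLp X 2 P) :
    P[X] ≤ √(P[X ^ 2]) := by
  have hsq : P[X] ^ 2 ≤ P[X ^ 2] := by
    have hvar := variance_nonneg X P
    rw [variance_eq_sub hX] at hvar
    linarith
  exact (le_abs_self _).trans (Real.abs_le_sqrt hsq)

theorem LipschitzWith.integrable_comp {Ω E F : Type*} [MeasurableSpace Ω] {P : Measure Ω}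
    [IsFiniteMeasure P] [NormedAddCommGroup E] [NormedAddCommGroup F] {K : ℝ≥0} {f : E → F}
    (hf : LipschitzWith K f) {g : Ω → E} (hg : Integrable g P) :
    Integrable (fun ω => f (g ω)) P := by
  refine ((integrable_const ‖f 0‖).add (hg.norm.const_mul K)).mono'
    (hf.continuous.comp_aestronglyMeasurable hg.aestronglyMeasurable) (ae_of_all _ fun ω => ?_)
  calc ‖f (g ω)‖ ≤ ‖f 0‖ + ‖f (g ω) - f 0‖ := norm_le_norm_add_norm_sub' _ _
    _ ≤ ‖f 0‖ + K * ‖g ω‖ := by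
      gcongr
      simpa [dist_eq_norm] using hf.dist_le_mul (g ω) 0

theorem LipschitzWith.integral_comp_add_smul_le {E : Type*} [NormedAddCommGroup E]
    [NormedSpace ℝ E] [MeasurableSpace E] {P : Measure E} [IsProbabilityMeasure P]
    (hP : Integrable (fun ξ => ξ) P) {K : ℝ≥0} {f : E → ℝ} (hf : LipschitzWith K f) (x : E) {t : ℝ}
    (ht : 0 ≤ t) :
    ∫ ξ, f (x + t • ξ) ∂P ≤ f x + t * K * ∫ ξ, ‖ξ‖ ∂P := by
  have hbound : ∀ ξ, f (x + t • ξ) ≤ f x + t * K * ‖ξ‖ := fun ξ => by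
    have hlip := hf.le_add_mul (x + t • ξ) x
    rwa [dist_self_add_left, norm_smul, Real.norm_of_nonneg ht, mul_left_comm, ← mul_assoc]
      at hlip
  calc ∫ ξ, f (x + t • ξ) ∂P ≤ ∫ ξ, (f x + t * K * ‖ξ‖) ∂P :=
        integral_mono (hf.integrable_comp ((integrable_const x).add (hP.smul t)))
          ((integrable_const _).add (hP.norm.const_mul _)) hbound
    _ = f x + t * K * ∫ ξ, ‖ξ‖ ∂P := by
        rw [integral_add (integrable_const _) (hP.norm.const_mul _), integral_const,
          integral_const_mul, probReal_univ, one_smul]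

section

variable {E : Type*} [NormedAddCommGroup E] [InnerProductSpace ℝ E] [FiniteDimensional ℝ E]
  [MeasurableSpace E] [BorelSpace E]

theorem integral_norm_sq_stdGaussian :
    ∫ x, ‖x‖ ^ 2 ∂(ProbabilityTheory.stdGaussian E) = Module.finrank ℝ E := by
  let b := stdOrthonormalBasis ℝ E
  have hcoord : ∀ i, ∫ x, ⟪b i, x⟫ ^ 2 ∂(ProbabilityTheory.stdGaussian E) = 1 := fun i => by
    have hvar := variance_dual_stdGaussian (innerSL ℝ (b i))
    rw [variance_of_integral_eq_zero (by fun_prop)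
      (integral_strongDual_stdGaussian _)] at hvar
    simpa [b.orthonormal.1 i] using hvar
  simp_rw [← b.sum_sq_inner_right]
  rw [integral_finsetSum _ fun i _ => ?_]
  · simp [hcoord]
  · exact (IsGaussian.memLp_two_id.const_inner (b i)).integrable_sq

theorem integral_norm_stdGaussian_le :
    ∫ x, ‖x‖ ∂(ProbabilityTheory.stdGaussian E) ≤ √(Module.finrank ℝ E) := by
  rw [← integral_norm_sq_stdGaussian]
  exact integral_le_sqrt_integral_sq IsGaussian.memLp_two_id.norm

end

theorem stdGaussian_eq_probabilityTheory_stdGaussian (n : ℕ) :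
    stdGaussian n = ProbabilityTheory.stdGaussian (EuclideanSpace ℝ (Fin n)) :=
  map_pi_eq_stdGaussian

theorem stmt1_general (n : ℕ) (f : EuclideanSpace ℝ (Fin n) → ℝ) (D : ℝ) (hD : 0 ≤ D)
    (hlip : ∀ x y : EuclideanSpace ℝ (Fin n), |f x - f y| ≤ D * ‖x - y‖)
    (μ : ℝ) (hμ : 0 < μ) :
    ∀ x : EuclideanSpace ℝ (Fin n),
      gaussianSmoothed f μ x ≤ f x + μ * D * Real.sqrt n := by
  intro x
  have hf : LipschitzWith D.toNNReal f := LipschitzWith.of_dist_le' hlip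
  have hsmooth := hf.integral_comp_add_smul_le
    (IsGaussian.integrable_fun_id (μ := ProbabilityTheory.stdGaussian _)) x hμ.le
  rw [Real.coe_toNNReal D hD] at hsmooth
  calc gaussianSmoothed f μ x ≤ f x + μ * D * ∫ ξ, ‖ξ‖ ∂(ProbabilityTheory.stdGaussian _) := by
        rwa [gaussianSmoothed, stdGaussian_eq_probabilityTheory_stdGaussian]
    _ ≤ f x + μ * D * Real.sqrt n := by
        have hmean := integral_norm_stdGaussian_le (E := EuclideanSpace ℝ (Fin n))
        rw [finrank_euclideanSpace_fin] at hmean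
        gcongr

theorem stmt1 (n : ℕ) (hn : 1 ≤ n) (f : EuclideanSpace ℝ (Fin n) → ℝ) (D : ℝ) (hD : 0 ≤ D)
    (hlip : ∀ x y : EuclideanSpace ℝ (Fin n), |f x - f y| ≤ D * ‖x - y‖)
    (μ : ℝ) (hμ : 0 < μ) :
    ∀ x : EuclideanSpace ℝ (Fin n),
      gaussianSmoothed f μ x ≤ f x + μ * D * Real.sqrt n :=
  stmt1_general n f D hD hlip μ hμ
end

section
/- Let f : ℝⁿ → ℝ be D-Lipschitz with D ≥ 0, and let μ > 0. Then for every x ∈ ℝⁿ, the expected norm of the gradient-free oracle is bounded: ∫ ‖((f(x + μξ) − f(x))/μ)·ξ‖ dγ(ξ) ≤ D·n. -/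
/-!
The Lipschitz bound gives `|f (x + μ ξ) - f x| / μ ≤ D ‖ξ‖`, so the norm of the oracle is at most
`D ‖ξ‖²`, and the second moment `∫ ‖ξ‖² dγ` of the standard Gaussian is the sum of the `n`
coordinate variances, that is `n`.
-/

open MeasureTheory ProbabilityTheory

lemma norm_div_sub_smul_le_of_lipschitz {E : Type*} [NormedAddCommGroup E] [NormedSpace ℝ E]
    {f : E → ℝ} {D : ℝ} (hlip : ∀ x y, |f x - f y| ≤ D * ‖x - y‖) {μ : ℝ} (hμ : μ ≠ 0)
    (x ξ : E) : ‖((f (x + μ • ξ) - f x) / μ) • ξ‖ ≤ D * ‖ξ‖ ^ 2 := by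
  have hdiff : |f (x + μ • ξ) - f x| ≤ D * ‖ξ‖ * |μ| := by
    simpa [norm_smul, mul_comm, mul_left_comm, mul_assoc] using hlip (x + μ • ξ) x
  calc ‖((f (x + μ • ξ) - f x) / μ) • ξ‖ = |f (x + μ • ξ) - f x| / |μ| * ‖ξ‖ := by
        rw [norm_smul, Real.norm_eq_abs, abs_div]
    _ ≤ D * ‖ξ‖ * ‖ξ‖ := by
        gcongr
        exact (div_le_iff₀ (abs_pos.mpr hμ)).mpr hdiff
    _ = D * ‖ξ‖ ^ 2 := by ring

lemma integrable_sq_gaussianReal (m : ℝ) (v : NNReal) :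
    Integrable (fun x => x ^ 2) (gaussianReal m v) :=
  (memLp_id_gaussianReal 2).integrable_sq

lemma integral_sq_gaussianReal_zero (v : NNReal) : ∫ x, x ^ 2 ∂gaussianReal 0 v = v := by
  simpa using (variance_eq_integral (μ := gaussianReal 0 v) measurable_id.aemeasurable).symm

section EuclideanPi

variable {ι : Type*} [Fintype ι] {ν : ι → Measure ℝ} [∀ i, IsProbabilityMeasure (ν i)]

lemma integrable_eval_sq_pi (hν : ∀ i, Integrable (fun x => x ^ 2) (ν i)) (i : ι) :
    Integrable (fun y : ι → ℝ => y i ^ 2) (Measure.pi ν) :=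
  integrable_comp_eval (X := fun _ => ℝ) (f := fun x => x ^ 2) (hν i)

lemma integrable_norm_toLp_sq_pi (hν : ∀ i, Integrable (fun x => x ^ 2) (ν i)) :
    Integrable (fun y => ‖WithLp.toLp 2 y‖ ^ 2) (Measure.pi ν) := by
  simp only [EuclideanSpace.norm_sq_eq, Real.norm_eq_abs, sq_abs]
  exact integrable_finsetSum _ fun i _ => integrable_eval_sq_pi hν i

lemma integral_norm_toLp_sq_pi (hν : ∀ i, Integrable (fun x => x ^ 2) (ν i)) :
    ∫ y, ‖WithLp.toLp 2 y‖ ^ 2 ∂Measure.pi ν = ∑ i, ∫ x, x ^ 2 ∂ν i := by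
  simp only [EuclideanSpace.norm_sq_eq, Real.norm_eq_abs, sq_abs]
  rw [integral_finsetSum _ fun i _ => integrable_eval_sq_pi hν i]
  exact Finset.sum_congr rfl fun i _ =>
    integral_comp_eval (X := fun _ => ℝ) (f := fun x => x ^ 2) (hν i).aestronglyMeasurable

end EuclideanPi

lemma integrable_norm_sq_stdGaussian (n : ℕ) :
    Integrable (fun ξ => ‖ξ‖ ^ 2) (stdGaussian n) := by
  rw [_root_.stdGaussian, integrable_map_equiv]
  exact integrable_norm_toLp_sq_pi fun _ => integrable_sq_gaussianReal 0 1

lemma integral_norm_sq_stdGaussian_s6 (n : ℕ) : ∫ ξ, ‖ξ‖ ^ 2 ∂stdGaussian n = n := by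
  rw [_root_.stdGaussian, integral_map_equiv]
  simp [integral_norm_toLp_sq_pi fun _ => integrable_sq_gaussianReal 0 1,
    integral_sq_gaussianReal_zero]

theorem stmt6_general (n : ℕ) (f : EuclideanSpace ℝ (Fin n) → ℝ) (D : ℝ)
    (hlip : ∀ x y : EuclideanSpace ℝ (Fin n), |f x - f y| ≤ D * ‖x - y‖)
    (μ : ℝ) (hμ : 0 < μ) :
    ∀ x : EuclideanSpace ℝ (Fin n),
      (∫ ξ, ‖((f (x + μ • ξ) - f x) / μ) • ξ‖ ∂(stdGaussian n)) ≤ D * n := by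
  intro x
  calc ∫ ξ, ‖((f (x + μ • ξ) - f x) / μ) • ξ‖ ∂stdGaussian n
      ≤ ∫ ξ, D * ‖ξ‖ ^ 2 ∂stdGaussian n :=
        integral_mono_of_nonneg (.of_forall fun _ => norm_nonneg _)
          ((integrable_norm_sq_stdGaussian n).const_mul D)
          (.of_forall (norm_div_sub_smul_le_of_lipschitz hlip hμ.ne' x))
    _ = D * n := by rw [integral_const_mul, integral_norm_sq_stdGaussian_s6]

theorem stmt6 (n : ℕ) (hn : 1 ≤ n) (f : EuclideanSpace ℝ (Fin n) → ℝ) (D : ℝ) (hD : 0 ≤ D)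
    (hlip : ∀ x y : EuclideanSpace ℝ (Fin n), |f x - f y| ≤ D * ‖x - y‖)
    (μ : ℝ) (hμ : 0 < μ) :
    ∀ x : EuclideanSpace ℝ (Fin n),
      (∫ ξ, ‖((f (x + μ • ξ) - f x) / μ) • ξ‖ ∂(stdGaussian n)) ≤ D * n :=
  stmt6_general n f D hlip μ hμ
end

section
/- Let k₁, k₂, k₄, k₅ be positive real constants with k₅ ≤ 1, let k₃, k₆, k₇ ≥ 0, and let α satisfy 0 < α < min{1/k₁, √(k₅/k₄)}. Let u, v : ℕ → ℝ be nonnegative sequences satisfying, for all t, u_{t+1} ≤ (1 − k₁α)·u_t + (k₂α + k₃α²)·v_t + k₆α² and v_{t+1} ≤ (1 − k₅ + k₄α²)·v_t + k₇α². Then limsup_{t→∞} u_t ≤ (k₆α²·(k₅ − k₄α²) + k₇α²·(k₂α + k₃α²)) / (k₁α·(k₅ − k₄α²)). -/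
open Filter

/-! The `v`-recursion alone is affine with ratio `1 - (k₅ - k₄α²) ∈ [0, 1)`, so `v` eventually lies
below its fixed point `k₇α² / (k₅ - k₄α²)` up to any `δ > 0`. Substituting this into the
`u`-recursion makes it affine with ratio `1 - k₁α ∈ [0, 1)` up to an arbitrarily small error, and
the bound is the fixed point `(k₆α² + (k₂α + k₃α²) k₇α² / (k₅ - k₄α²)) / (k₁α)` of that recursion. -/

section AffineRecursion

variable {x : ℕ → ℝ} {r c : ℝ}

lemma sub_div_one_sub_le_pow_mul (hr0 : 0 ≤ r) (hr1 : r ≠ 1) {N : ℕ}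
    (hrec : ∀ t ≥ N, x (t + 1) ≤ r * x t + c) (n : ℕ) :
    x (N + n) - c / (1 - r) ≤ r ^ n * (x N - c / (1 - r)) := by
  induction n with
  | zero => simp
  | succ n ih =>
    have hfix : c - c / (1 - r) = -(r * (c / (1 - r))) := by
      field_simp [sub_ne_zero.mpr hr1.symm]
      ring
    calc x (N + (n + 1)) - c / (1 - r)
        ≤ r * x (N + n) + c - c / (1 - r) := by gcongr; exact hrec (N + n) (by omega)
      _ = r * (x (N + n) - c / (1 - r)) := by rw [add_sub_assoc, hfix]; ring
      _ ≤ r * (r ^ n * (x N - c / (1 - r))) := by gcongr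
      _ = r ^ (n + 1) * (x N - c / (1 - r)) := by ring

lemma eventually_le_div_one_sub_add (hr0 : 0 ≤ r) (hr1 : r < 1)
    (hrec : ∀ᶠ t in atTop, x (t + 1) ≤ r * x t + c) {ε : ℝ} (hε : 0 < ε) :
    ∀ᶠ t in atTop, x t ≤ c / (1 - r) + ε := by
  obtain ⟨N, hN⟩ := eventually_atTop.1 hrec
  have hdecay : Tendsto (fun n ↦ r ^ n * (x N - c / (1 - r))) atTop (nhds 0) := by
    simpa using (tendsto_pow_atTop_nhds_zero_of_lt_one hr0 hr1).mul_const (x N - c / (1 - r))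
  obtain ⟨M, hM⟩ := eventually_atTop.1 (hdecay.eventually_lt_const hε)
  filter_upwards [eventually_ge_atTop (N + M)] with t ht
  obtain ⟨n, rfl⟩ : ∃ n, t = N + n := ⟨t - N, by omega⟩
  linarith [sub_div_one_sub_le_pow_mul hr0 hr1.ne hN n, hM n (by omega)]

lemma limsup_le_div_one_sub (hr0 : 0 ≤ r) (hr1 : r < 1)
    (hx : IsBoundedUnder (· ≥ ·) atTop x)
    (hrec : ∀ ε > 0, ∀ᶠ t in atTop, x (t + 1) ≤ r * x t + (c + ε)) :
    limsup x atTop ≤ c / (1 - r) := by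
  have h1r : 0 < 1 - r := sub_pos.mpr hr1
  refine le_of_forall_pos_le_add fun ε hε ↦ limsup_le_of_le hx.isCoboundedUnder_le ?_
  filter_upwards [eventually_le_div_one_sub_add hr0 hr1 (hrec (ε * (1 - r) / 2) (by positivity))
    (half_pos hε)] with t ht
  refine ht.trans_eq ?_
  field_simp
  ring

end AffineRecursion

theorem stmt13_general (k₁ k₂ k₃ k₄ k₅ k₆ k₇ α : ℝ)
    (hk₁ : 0 < k₁) (hk₂ : 0 < k₂) (hk₃ : 0 ≤ k₃) (hk₄ : 0 < k₄)
    (hk₅1 : k₅ ≤ 1)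
    (hα0 : 0 < α) (hα : α < min (1 / k₁) (Real.sqrt (k₅ / k₄)))
    (u v : ℕ → ℝ) (hu : ∀ t, 0 ≤ u t)
    (hrecu : ∀ t, u (t + 1) ≤ (1 - k₁ * α) * u t + (k₂ * α + k₃ * α ^ 2) * v t + k₆ * α ^ 2)
    (hrecv : ∀ t, v (t + 1) ≤ (1 - k₅ + k₄ * α ^ 2) * v t + k₇ * α ^ 2) :
    limsup u atTop ≤
      (k₆ * α ^ 2 * (k₅ - k₄ * α ^ 2) + k₇ * α ^ 2 * (k₂ * α + k₃ * α ^ 2))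
        / (k₁ * α * (k₅ - k₄ * α ^ 2)) := by
  have hk₁α : k₁ * α < 1 := by
    have := lt_of_lt_of_le hα (min_le_left _ _)
    rwa [lt_div_iff₀ hk₁, mul_comm] at this
  have hβ : 0 < k₅ - k₄ * α ^ 2 := by
    have := (Real.lt_sqrt hα0.le).mp (lt_of_lt_of_le hα (min_le_right _ _))
    rw [lt_div_iff₀ hk₄] at this
    linarith
  set β := k₅ - k₄ * α ^ 2
  set A := k₂ * α + k₃ * α ^ 2
  have hA : 0 < A := by positivity
  have hv : ∀ δ > 0, ∀ᶠ t in atTop, v t ≤ k₇ * α ^ 2 / β + δ := fun δ hδ ↦ by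
    have := eventually_le_div_one_sub_add (by nlinarith) (by linarith) (.of_forall hrecv) hδ
    rwa [show 1 - (1 - k₅ + k₄ * α ^ 2) = β by ring] at this
  have hu' : ∀ ε > 0, ∀ᶠ t in atTop,
      u (t + 1) ≤ (1 - k₁ * α) * u t + (k₆ * α ^ 2 + A * (k₇ * α ^ 2 / β) + ε) := fun ε hε ↦ by
    filter_upwards [hv (ε / A) (by positivity)] with t ht
    have := mul_le_mul_of_nonneg_left ht hA.le
    rw [mul_add, mul_div_cancel₀ _ hA.ne'] at this
    linarith [hrecu t]
  convert limsup_le_div_one_sub (by linarith) (by linarith [mul_pos hk₁ hα0])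
    (isBoundedUnder_of ⟨0, hu⟩) hu' using 1
  field_simp
  ring

theorem stmt13 (k₁ k₂ k₃ k₄ k₅ k₆ k₇ α : ℝ)
    (hk₁ : 0 < k₁) (hk₂ : 0 < k₂) (hk₃ : 0 ≤ k₃) (hk₄ : 0 < k₄)
    (hk₅0 : 0 < k₅) (hk₅1 : k₅ ≤ 1) (hk₆ : 0 ≤ k₆) (hk₇ : 0 ≤ k₇)
    (hα0 : 0 < α) (hα : α < min (1 / k₁) (Real.sqrt (k₅ / k₄)))
    (u v : ℕ → ℝ) (hu : ∀ t, 0 ≤ u t) (hv : ∀ t, 0 ≤ v t)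
    (hrecu : ∀ t, u (t + 1) ≤ (1 - k₁ * α) * u t + (k₂ * α + k₃ * α ^ 2) * v t + k₆ * α ^ 2)
    (hrecv : ∀ t, v (t + 1) ≤ (1 - k₅ + k₄ * α ^ 2) * v t + k₇ * α ^ 2) :
    limsup u atTop ≤
      (k₆ * α ^ 2 * (k₅ - k₄ * α ^ 2) + k₇ * α ^ 2 * (k₂ * α + k₃ * α ^ 2))
        / (k₁ * α * (k₅ - k₄ * α ^ 2)) :=
  stmt13_general k₁ k₂ k₃ k₄ k₅ k₆ k₇ α hk₁ hk₂ hk₃ hk₄ hk₅1 hα0 hα u v hu hrecu hrecv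
end
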